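/- For every fixed real x > 0, the function m ↦ m · V_m(x) is increasing in m on (-1, ∞). -/

import Mathlib

open MeasureTheory Real Set

/-- The one-dimensional regularized Coulomb potential `V_m(x)`. -/
noncomputable def V (m x : ℝ) : ℝ :=
  (1 / Real.Gamma (m + 1)) *
    ∫ u in Set.Ioi (0:ℝ), u ^ m * Real.exp (-u) / Real.sqrt (x ^ 2 + u)

/-!
Integrating by parts against the Gamma weight `u ^ m * exp (-u)` (Stein's identity for the Gamma
distribution) turns `m * V_m(x)` into the mean, under the Gamma law of shape `m + 1`, of
`K(u) = √s - (x² + 1/2) / √s - x² / (2 s^{3/2})` with `s = x² + u`. Each term of `K` is increasing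
in `u`, and Gamma laws increase with their shape in the likelihood-ratio order (the density ratio
is a power of `u`), so by Chebyshev's integral inequality these means increase with `m`.
-/

open Filter Topology

theorem MonovaryOn.setIntegral_mul_setIntegral_le {α : Type*} [MeasurableSpace α]
    {μ : Measure α} [SFinite μ] {s : Set α} (hs : MeasurableSet s) {w f g : α → ℝ}
    (hfg : MonovaryOn f g s) (hw : ∀ a ∈ s, 0 ≤ w a) (hw_int : IntegrableOn w s μ)
    (hwf : IntegrableOn (fun a => w a * f a) s μ) (hwg : IntegrableOn (fun a => w a * g a) s μ)
    (hwfg : IntegrableOn (fun a => w a * f a * g a) s μ) :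
    (∫ a in s, w a * f a ∂μ) * (∫ a in s, w a * g a ∂μ) ≤
      (∫ a in s, w a ∂μ) * ∫ a in s, w a * f a * g a ∂μ := by
  set ν := μ.restrict s
  have hnonneg : 0 ≤ ∫ p, w p.1 * w p.2 * ((f p.2 - f p.1) * (g p.2 - g p.1)) ∂ν.prod ν := by
    refine integral_nonneg_of_ae ?_
    rw [Measure.prod_restrict]
    filter_upwards [ae_restrict_mem (hs.prod hs)] with p ⟨h1, h2⟩
    exact mul_nonneg (mul_nonneg (hw _ h1) (hw _ h2)) (hfg.sub_mul_sub_nonneg h1 h2)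
  have hexpand : ∀ p : α × α, w p.1 * w p.2 * ((f p.2 - f p.1) * (g p.2 - g p.1)) =
      (w p.1 * (w p.2 * f p.2 * g p.2) + w p.1 * f p.1 * g p.1 * w p.2) -
        (w p.1 * f p.1 * (w p.2 * g p.2) + w p.1 * g p.1 * (w p.2 * f p.2)) := fun p => by ring
  simp_rw [hexpand] at hnonneg
  have i₁ := hw_int.mul_prod hwfg
  have i₂ := hwfg.mul_prod hw_int
  have i₃ := hwf.mul_prod hwg
  have i₄ := hwg.mul_prod hwf
  rw [integral_sub, integral_add, integral_add, integral_prod_mul w (fun a => w a * f a * g a),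
    integral_prod_mul (fun a => w a * f a * g a) w,
    integral_prod_mul (fun a => w a * f a) (fun a => w a * g a),
    integral_prod_mul (fun a => w a * g a) (fun a => w a * f a)] at hnonneg
  · linarith
  all_goals first | exact i₁.add i₂ | exact i₃.add i₄ | assumption

lemma integrableOn_rpow_mul_exp_neg {k : ℝ} (hk : -1 < k) :
    IntegrableOn (fun u : ℝ => u ^ k * exp (-u)) (Ioi 0) := by
  simpa using integrableOn_rpow_mul_exp_neg_rpow hk one_pos

lemma setIntegral_rpow_mul_exp_neg {k : ℝ} (hk : -1 < k) :
    ∫ u in Ioi (0:ℝ), u ^ k * exp (-u) = Gamma (k + 1) := by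
  rw [Gamma_eq_integral (by linarith), add_sub_cancel_right]
  simp_rw [mul_comm]

lemma integrableOn_rpow_mul_exp_neg_mul {k C : ℝ} (hk : -1 < k) {p : ℝ → ℝ}
    (hp : ContinuousOn p (Ioi 0)) (hpC : ∀ u ∈ Ioi (0:ℝ), |p u| ≤ C) :
    IntegrableOn (fun u => u ^ k * exp (-u) * p u) (Ioi 0) :=
  (integrableOn_rpow_mul_exp_neg hk).mul_bdd (hp.aestronglyMeasurable measurableSet_Ioi)
    ((ae_restrict_iff' measurableSet_Ioi).2 (ae_of_all _ hpC))

section SteinIdentity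

variable {m C C' : ℝ} {p p' : ℝ → ℝ}

lemma integrableOn_rpow_mul_exp_neg_mul_stein (hm : -1 < m)
    (hp : ∀ u ∈ Ioi (0:ℝ), HasDerivAt p (p' u) u) (hp' : ContinuousOn p' (Ioi 0))
    (hpC : ∀ u ∈ Ioi (0:ℝ), |p u| ≤ C) (hp'C : ∀ u ∈ Ioi (0:ℝ), |p' u| ≤ C') :
    IntegrableOn (fun u => u ^ m * exp (-u) * ((u - (m + 1)) * p u - u * p' u)) (Ioi 0) := by
  have hpc : ContinuousOn p (Ioi 0) := fun u hu => (hp u hu).continuousAt.continuousWithinAt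
  have hm1 : -1 < m + 1 := by linarith
  refine (((integrableOn_rpow_mul_exp_neg_mul hm1 hpc hpC).sub
    ((integrableOn_rpow_mul_exp_neg_mul hm hpc hpC).const_mul (m + 1))).sub
    (integrableOn_rpow_mul_exp_neg_mul hm1 hp' hp'C)).congr_fun (fun u hu => ?_) measurableSet_Ioi
  simp only [Pi.sub_apply, rpow_add_one (ne_of_gt hu)]
  ring

theorem integral_rpow_mul_exp_neg_mul_stein (hm : -1 < m)
    (hp : ∀ u ∈ Ioi (0:ℝ), HasDerivAt p (p' u) u) (hp0 : ContinuousWithinAt p (Ici 0) 0)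
    (hp' : ContinuousOn p' (Ioi 0))
    (hpC : ∀ u ∈ Ioi (0:ℝ), |p u| ≤ C) (hp'C : ∀ u ∈ Ioi (0:ℝ), |p' u| ≤ C') :
    ∫ u in Ioi 0, u ^ m * exp (-u) * ((u - (m + 1)) * p u - u * p' u) = 0 := by
  set φ : ℝ → ℝ := fun u => u ^ (m + 1) * exp (-u) * p u
  have hderiv : ∀ u ∈ Ioi (0:ℝ),
      HasDerivAt φ (-(u ^ m * exp (-u) * ((u - (m + 1)) * p u - u * p' u))) u := by
    intro u hu
    have hpow : HasDerivAt (fun u : ℝ => u ^ (m + 1)) ((m + 1) * u ^ m) u := by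
      simpa using hasDerivAt_rpow_const (p := m + 1) (Or.inl (ne_of_gt hu))
    refine ((hpow.mul (hasDerivAt_neg u).exp).mul (hp u hu)).congr_deriv ?_
    simp only [Pi.mul_apply, rpow_add_one (ne_of_gt hu)]
    ring
  have hφ0 : ContinuousWithinAt φ (Ici 0) 0 :=
    ((continuousAt_rpow_const 0 (m + 1) (Or.inr (by linarith))).continuousWithinAt.mul
      (continuous_exp.comp continuous_neg).continuousWithinAt).mul hp0
  have hφtop : Tendsto φ atTop (𝓝 0) := by
    have hdom := (tendsto_rpow_mul_exp_neg_mul_atTop_nhds_zero (m + 1) 1 one_pos).const_mul C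
    simp only [neg_mul, one_mul, mul_zero] at hdom
    refine squeeze_zero_norm' ?_ hdom
    filter_upwards [Ioi_mem_atTop 0] with u (hu : 0 < u)
    rw [norm_mul, norm_of_nonneg (by positivity), mul_comm]
    exact mul_le_mul_of_nonneg_right (hpC u hu) (by positivity)
  have hftc := integral_Ioi_of_hasDerivAt_of_tendsto hφ0 hderiv
    (integrableOn_rpow_mul_exp_neg_mul_stein hm hp hp' hpC hp'C).neg hφtop
  rw [integral_neg] at hftc
  simpa [φ, zero_rpow (by linarith : m + 1 ≠ 0)] using hftc

end SteinIdentity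

noncomputable def gammaMean (m : ℝ) (g : ℝ → ℝ) : ℝ :=
  (∫ u in Ioi 0, u ^ m * exp (-u) * g u) / Gamma (m + 1)

theorem monotoneOn_gammaMean {g : ℝ → ℝ} (hg : MonotoneOn g (Ioi 0))
    (hint : ∀ m : ℝ, -1 < m → IntegrableOn (fun u => u ^ m * exp (-u) * g u) (Ioi 0)) :
    MonotoneOn (fun m => gammaMean m g) (Ioi (-1)) := by
  intro m (hm : -1 < m) m' (hm' : -1 < m') hmm'
  have hweight : ∀ u ∈ Ioi (0:ℝ), u ^ m * exp (-u) * u ^ (m' - m) = u ^ m' * exp (-u) :=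
    fun u (hu : 0 < u) => by rw [mul_right_comm, ← rpow_add hu, add_sub_cancel]
  have hratio : MonotoneOn (fun u : ℝ => u ^ (m' - m)) (Ioi 0) :=
    fun a ha b _ hab => rpow_le_rpow (le_of_lt ha) hab (sub_nonneg.2 hmm')
  have hΓ : ∫ u in Ioi 0, u ^ m * exp (-u) * u ^ (m' - m) = Gamma (m' + 1) := by
    rw [setIntegral_congr_fun measurableSet_Ioi hweight, setIntegral_rpow_mul_exp_neg hm']
  have hg_int : ∫ u in Ioi 0, u ^ m * exp (-u) * u ^ (m' - m) * g u =
      ∫ u in Ioi 0, u ^ m' * exp (-u) * g u :=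
    setIntegral_congr_fun measurableSet_Ioi fun u hu => by simp only [hweight u hu]
  have hcheb := (hratio.monovaryOn hg).setIntegral_mul_setIntegral_le measurableSet_Ioi
    (fun u (hu : 0 < u) => by positivity) (integrableOn_rpow_mul_exp_neg hm)
    ((integrableOn_rpow_mul_exp_neg hm').congr_fun (fun u hu => (hweight u hu).symm)
      measurableSet_Ioi) (hint m hm)
    ((hint m' hm').congr_fun (fun u hu => by simp only [hweight u hu]) measurableSet_Ioi)
  rw [hΓ, hg_int, setIntegral_rpow_mul_exp_neg hm] at hcheb
  simp only [gammaMean]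
  rw [div_le_div_iff₀ (Gamma_pos_of_pos (by linarith)) (Gamma_pos_of_pos (by linarith))]
  linarith

noncomputable def mulVKernel (x u : ℝ) : ℝ :=
  (x ^ 2 + u) ^ (1 / 2 : ℝ) - (x ^ 2 + 1 / 2) * (x ^ 2 + u) ^ (-(1 / 2) : ℝ) -
    x ^ 2 / 2 * (x ^ 2 + u) ^ (-(3 / 2) : ℝ)

lemma monotoneOn_mulVKernel (x : ℝ) : MonotoneOn (mulVKernel x) (Ioi 0) := by
  intro a (ha : 0 < a) b _ hab
  have hs : 0 < x ^ 2 + a := by positivity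
  have hst : x ^ 2 + a ≤ x ^ 2 + b := by linarith
  unfold mulVKernel
  gcongr ?_ - ?_ * ?_ - ?_ * ?_
  · exact rpow_le_rpow hs.le hst (by norm_num)
  · exact rpow_le_rpow_of_nonpos hs hst (by norm_num)
  · exact rpow_le_rpow_of_nonpos hs hst (by norm_num)

section Kernel

variable {x m : ℝ}

lemma mulVKernel_eq {u : ℝ} (hs : 0 < x ^ 2 + u) :
    mulVKernel x u = (u - 1) * (x ^ 2 + u) ^ (-(1 / 2) : ℝ) +
      u / 2 * (x ^ 2 + u) ^ (-(3 / 2) : ℝ) := by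
  have h₁ : (x ^ 2 + u) ^ (1 / 2 : ℝ) = (x ^ 2 + u) ^ (-(1 / 2) : ℝ) * (x ^ 2 + u) := by
    rw [← rpow_add_one hs.ne']; norm_num
  have h₂ : (x ^ 2 + u) ^ (-(1 / 2) : ℝ) = (x ^ 2 + u) ^ (-(3 / 2) : ℝ) * (x ^ 2 + u) := by
    rw [← rpow_add_one hs.ne']; norm_num
  rw [mulVKernel, h₁, h₂]
  ring

lemma hasDerivAt_sq_add_rpow (q : ℝ) {u : ℝ} (hs : 0 < x ^ 2 + u) :
    HasDerivAt (fun u => (x ^ 2 + u) ^ q) (q * (x ^ 2 + u) ^ (q - 1)) u := by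
  simpa using ((hasDerivAt_id u).const_add (x ^ 2)).rpow_const (p := q) (Or.inl hs.ne')

lemma continuousOn_sq_add_rpow (hx : 0 < x) (q : ℝ) :
    ContinuousOn (fun u => (x ^ 2 + u) ^ q) (Ici 0) := fun u (hu : 0 ≤ u) =>
  (hasDerivAt_sq_add_rpow q (by positivity)).continuousAt.continuousWithinAt

lemma abs_sq_add_rpow_le (hx : 0 < x) {q : ℝ} (hq : q ≤ 0) {u : ℝ} (hu : 0 < u) :
    |(x ^ 2 + u) ^ q| ≤ (x ^ 2) ^ q := by
  rw [abs_of_nonneg (by positivity)]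
  exact rpow_le_rpow_of_nonpos (by positivity) (by linarith) hq

lemma integrableOn_rpow_mul_exp_neg_mul_sq_add_rpow (hx : 0 < x) {k : ℝ} (hk : -1 < k)
    {q : ℝ} (hq : q ≤ 0) :
    IntegrableOn (fun u => u ^ k * exp (-u) * (x ^ 2 + u) ^ q) (Ioi 0) :=
  integrableOn_rpow_mul_exp_neg_mul hk ((continuousOn_sq_add_rpow hx q).mono Ioi_subset_Ici_self)
    fun _ hu => abs_sq_add_rpow_le hx hq hu

lemma integrableOn_rpow_mul_exp_neg_mul_mulVKernel (hx : 0 < x) (hm : -1 < m) :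
    IntegrableOn (fun u => u ^ m * exp (-u) * mulVKernel x u) (Ioi 0) := by
  have hm1 : -1 < m + 1 := by linarith
  refine (((integrableOn_rpow_mul_exp_neg_mul_sq_add_rpow hx hm1 (q := -(1 / 2)) (by norm_num)).sub
    (integrableOn_rpow_mul_exp_neg_mul_sq_add_rpow hx hm (q := -(1 / 2)) (by norm_num))).add
    ((integrableOn_rpow_mul_exp_neg_mul_sq_add_rpow hx hm1 (q := -(3 / 2)) (by norm_num)).const_mul
      (1 / 2))).congr_fun (fun u (hu : 0 < u) => ?_) measurableSet_Ioi
  simp only [Pi.add_apply, Pi.sub_apply, mulVKernel_eq (by positivity : 0 < x ^ 2 + u),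
    rpow_add_one hu.ne']
  ring

theorem mul_V_eq_gammaMean (hx : 0 < x) (hm : -1 < m) :
    m * V m x = gammaMean m (mulVKernel x) := by
  have hsqrt : ∫ u in Ioi 0, u ^ m * exp (-u) / √(x ^ 2 + u) =
      ∫ u in Ioi 0, u ^ m * exp (-u) * (x ^ 2 + u) ^ (-(1 / 2) : ℝ) :=
    setIntegral_congr_fun measurableSet_Ioi fun u (hu : 0 < u) => by
      rw [sqrt_eq_rpow, rpow_neg (by positivity), div_eq_mul_inv]
  have hstein := integral_rpow_mul_exp_neg_mul_stein hm
    (p := fun u => (x ^ 2 + u) ^ (-(1 / 2) : ℝ))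
    (p' := fun u => -(1 / 2) * (x ^ 2 + u) ^ (-(3 / 2) : ℝ))
    (fun u (hu : 0 < u) => by
      convert hasDerivAt_sq_add_rpow (x := x) (u := u) (-(1 / 2)) (by positivity) using 2; norm_num)
    ((continuousOn_sq_add_rpow hx _).continuousWithinAt self_mem_Ici)
    ((continuousOn_const.mul (continuousOn_sq_add_rpow hx _)).mono Ioi_subset_Ici_self)
    (fun u hu => abs_sq_add_rpow_le hx (by norm_num) hu)
    (C' := (x ^ 2) ^ (-(3 / 2) : ℝ)) (fun u hu => by
      rw [abs_mul]
      norm_num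
      linarith [abs_sq_add_rpow_le hx (q := -(3 / 2)) (by norm_num) hu,
        abs_nonneg ((x ^ 2 + u) ^ (-(3 / 2) : ℝ))])
  have hsplit : ∫ u in Ioi 0, u ^ m * exp (-u) * mulVKernel x u -
      m * (u ^ m * exp (-u) * (x ^ 2 + u) ^ (-(1 / 2) : ℝ)) =
      ∫ u in Ioi 0, u ^ m * exp (-u) * ((u - (m + 1)) * (x ^ 2 + u) ^ (-(1 / 2) : ℝ) -
        u * (-(1 / 2) * (x ^ 2 + u) ^ (-(3 / 2) : ℝ))) :=
    setIntegral_congr_fun measurableSet_Ioi fun u (hu : 0 < u) => by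
      rw [mulVKernel_eq (by positivity)]
      ring
  rw [hstein, integral_sub (integrableOn_rpow_mul_exp_neg_mul_mulVKernel hx hm)
    ((integrableOn_rpow_mul_exp_neg_mul_sq_add_rpow hx hm (by norm_num)).const_mul m),
    integral_const_mul, sub_eq_zero] at hsplit
  rw [V, gammaMean, hsqrt, hsplit]
  ring

end Kernel

theorem mul_V_monotone_in_m (x : ℝ) (hx : 0 < x) :
    MonotoneOn (fun m => m * V m x) (Set.Ioi (-1)) :=
  (monotoneOn_gammaMean (monotoneOn_mulVKernel x)
    fun _ hm => integrableOn_rpow_mul_exp_neg_mul_mulVKernel hx hm).congr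
    fun _ hm => (mul_V_eq_gammaMean hx hm).symm
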